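/- (Confluent Christoffel–Darboux formula.) Suppose p_0, p_1, p_2, … are real polynomials and (a_j)_{j≥1}, (b_j)_{j≥1}, (c_j)_{j≥2} are reals with a_j ≠ 0 for all j ≥ 1, satisfying p_1 = (a_1 X + b_1)·p_0 and, for every j ≥ 2, p_j = (a_j X + b_j)·p_{j−1} − c_j·p_{j−2} with c_j = a_j / a_{j−1}. Then for every n ≥ 1 and every real x: Σ_{i=0}^{n−1} p_i(x)² = (p_n'(x)·p_{n−1}(x) − p_{n−1}'(x)·p_n(x)) / a_n, where p' denotes the formal derivative of the polynomial p. -/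

import Mathlib

/-!
The Wronskian `W_n = p_{n-1} p_n' - p_{n-1}' p_n` of consecutive terms obeys
`W_{n+1} = a_{n+1} p_n² + c_{n+1} W_n`, since the `X`-dependence of the recurrence coefficient
cancels. With `c_{n+1} = a_{n+1} / a_n` this says `W_{n+1} / a_{n+1} = p_n² + W_n / a_n`, which
telescopes to the sum of squares.
-/

open Polynomial

namespace Polynomial

variable {R : Type*} [CommRing R]

theorem wronskian_linear_mul_sub (q r : R[X]) (α β γ : R) :
    wronskian r ((C α * X + C β) * r - C γ * q) = C α * r ^ 2 + C γ * wronskian q r := by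
  simp only [wronskian, derivative_sub, derivative_mul, derivative_add, derivative_C,
    derivative_X]
  ring

theorem wronskian_linear_mul_self (r : R[X]) (α β : R) :
    wronskian r ((C α * X + C β) * r) = C α * r ^ 2 := by
  simpa using wronskian_linear_mul_sub 0 r α β 0

theorem wronskian_eq_C_mul_sum_sq_of_three_term {p : ℕ → R[X]} {a b c : ℕ → R}
    (h1 : p 1 = (C (a 1) * X + C (b 1)) * p 0)
    (hrec : ∀ j, p (j + 2) =
      (C (a (j + 2)) * X + C (b (j + 2))) * p (j + 1) - C (c (j + 2)) * p j)
    (hc : ∀ j, c (j + 2) * a (j + 1) = a (j + 2)) (n : ℕ) :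
    wronskian (p n) (p (n + 1)) = C (a (n + 1)) * ∑ i ∈ Finset.range (n + 1), p i ^ 2 := by
  induction n with
  | zero => simp [h1, wronskian_linear_mul_self]
  | succ n ih =>
    rw [hrec, wronskian_linear_mul_sub, ih, Finset.sum_range_succ _ (n + 1), ← hc n, C_mul]
    ring

end Polynomial

theorem stmt_8 (p : ℕ → Polynomial ℝ) (a b c : ℕ → ℝ)
    (ha : ∀ j, 1 ≤ j → a j ≠ 0)
    (h1 : p 1 = (Polynomial.C (a 1) * Polynomial.X + Polynomial.C (b 1)) * p 0)
    (hrec : ∀ j, 2 ≤ j →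
      p j = (Polynomial.C (a j) * Polynomial.X + Polynomial.C (b j)) * p (j - 1) -
        Polynomial.C (c j) * p (j - 2))
    (hc : ∀ j, 2 ≤ j → c j = a j / a (j - 1))
    (n : ℕ) (hn : 1 ≤ n) (x : ℝ) :
    ∑ i ∈ Finset.range n, (p i).eval x ^ 2 =
      ((Polynomial.derivative (p n)).eval x * (p (n - 1)).eval x -
          (Polynomial.derivative (p (n - 1))).eval x * (p n).eval x) / a n := by
  obtain ⟨m, rfl⟩ : ∃ m, n = m + 1 := ⟨n - 1, by omega⟩
  have hrec' (j : ℕ) := by simpa using hrec (j + 2) (by omega)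
  have hc' (j : ℕ) : c (j + 2) * a (j + 1) = a (j + 2) := by
    simpa [hc (j + 2) (by omega)] using div_mul_cancel₀ (a (j + 2)) (ha (j + 1) (by omega))
  have hW := congrArg (eval x) (wronskian_eq_C_mul_sum_sq_of_three_term h1 hrec' hc' m)
  simp only [wronskian, eval_sub, eval_mul, eval_C, eval_finsetSum, eval_pow] at hW
  rw [Nat.add_sub_cancel, eq_div_iff (ha (m + 1) (by omega))]
  linarith
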